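/- arXiv:1906.09801 — 2 statements merged into one kernel-verified Lean document; each statement's English description precedes it below -/
import Mathlib

section
/- Let U ⊆ ℂ^k be an open set on which P_s has k pairwise distinct roots, and let Ψ : U → ℂ^k be a holomorphic solution of the system (@@). Then s ↦ A(s)Ψ(s) is also a solution of (@@) on U. -/
/-! Since `A(s)` is affine in `s` with all its dependence in the last row, the product rule
gives `∂_h (AΨ) = (∂_h A) Ψ + A ∂_h Ψ`, and comparing last rows shows
`(−1)^{k+h} (∂_h A) x = (∂_k A) A^{k−h} x`, because the first entry of `A^{k−h} x` is the
`(k−h+1)`-st entry of `x`. Applying `A` to the equation (@@) for `Ψ` and moving it past `A^{k−h}`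
and `P'_s(A)⁻¹`, the inverse of a polynomial in `A`, then gives (@@) for `AΨ`. -/

open Matrix Complex

noncomputable section

/-- The universal monic polynomial `P_s(z) = Σ_{h=0}^{k} (−1)^h s_h z^{k−h}` (with `s_0 = 1`),
where `s i` represents the `(i+1)`-st coefficient `s_{i+1}`. -/
def LP (k : ℕ) (s : Fin k → ℂ) (z : ℂ) : ℂ :=
  z ^ k + ∑ i : Fin k, (-1 : ℂ) ^ ((i : ℕ) + 1) * s i * z ^ (k - 1 - (i : ℕ))

/-- The companion matrix `A(s)` of `P_s`. -/
def LcompA (k : ℕ) (s : Fin k → ℂ) : Matrix (Fin k) (Fin k) ℂ := fun i j =>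
  if (i : ℕ) = k - 1 then
    (-1 : ℂ) ^ (k - 1 - (j : ℕ)) * s ⟨k - 1 - (j : ℕ), by have := j.isLt; omega⟩
  else if (j : ℕ) = (i : ℕ) + 1 then 1 else 0

/-- `P'_s(A(s)) = Σ_{h=0}^{k−1} (−1)^h (k−h) s_h A(s)^{k−h−1}` (with `s_0 = 1`). -/
def LPprimeA (k : ℕ) (s : Fin k → ℂ) : Matrix (Fin k) (Fin k) ℂ :=
  (k : ℂ) • LcompA k s ^ (k - 1) + ∑ i : Fin k,
    ((-1 : ℂ) ^ ((i : ℕ) + 1) * ((k - 1 - (i : ℕ) : ℕ) : ℂ) * s i) •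
      LcompA k s ^ (k - 2 - (i : ℕ))

/-- The system (@) at a point `s`: `(−1)^{k+h} ∂Φ/∂s_h = ∂(A(s)^{k−h} Φ)/∂s_k`
for every `h ∈ {1, …, k−1}`. -/
def SatA (k : ℕ) (Φ : (Fin k → ℂ) → Fin k → ℂ) (s : Fin k → ℂ) : Prop :=
  ∀ h : ℕ, ∀ _h1 : 1 ≤ h, ∀ _h2 : h ≤ k - 1,
    ((-1 : ℂ) ^ (k + h)) •
        fderiv ℂ Φ s (Pi.single (⟨h - 1, by omega⟩ : Fin k) (1 : ℂ))
      = fderiv ℂ (fun t => (LcompA k t ^ (k - h)) *ᵥ Φ t) s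
          (Pi.single (⟨k - 1, by omega⟩ : Fin k) (1 : ℂ))

/-- The system (@@) at a point `s`:
`(−1)^{k+h} ∂Ψ/∂s_h = ∂(A(s)^{k−h} Ψ)/∂s_k + (−1)^k (k−h) A(s)^{k−h−1} P'_s(A(s))⁻¹ Ψ`
for every `h ∈ {1, …, k−1}`. -/
def SatAA (k : ℕ) (Ψ : (Fin k → ℂ) → Fin k → ℂ) (s : Fin k → ℂ) : Prop :=
  ∀ h : ℕ, ∀ _h1 : 1 ≤ h, ∀ _h2 : h ≤ k - 1,
    ((-1 : ℂ) ^ (k + h)) •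
        fderiv ℂ Ψ s (Pi.single (⟨h - 1, by omega⟩ : Fin k) (1 : ℂ))
      = fderiv ℂ (fun t => (LcompA k t ^ (k - h)) *ᵥ Ψ t) s
          (Pi.single (⟨k - 1, by omega⟩ : Fin k) (1 : ℂ))
        + ((-1 : ℂ) ^ k * ((k - h : ℕ) : ℂ)) •
            ((LcompA k s ^ (k - h - 1)) *ᵥ ((LPprimeA k s)⁻¹ *ᵥ Ψ s))

section MatrixMulVec

variable {𝕜 E m n : Type*} [NontriviallyNormedField 𝕜] [NormedAddCommGroup E] [NormedSpace 𝕜 E]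
  [Fintype n] {M : E → Matrix m n 𝕜} {w : E → n → 𝕜} {s : E}

theorem DifferentiableAt.matrix_mulVec (hM : ∀ i j, DifferentiableAt 𝕜 (fun t => M t i j) s)
    (hw : DifferentiableAt 𝕜 w s) : DifferentiableAt 𝕜 (fun t => M t *ᵥ w t) s :=
  differentiableAt_pi.2 fun i =>
    DifferentiableAt.fun_sum fun j _ => (hM i j).mul (differentiableAt_pi.1 hw j)

theorem fderiv_matrix_mulVec_apply [Fintype m]
    (hM : ∀ i j, DifferentiableAt 𝕜 (fun t => M t i j) s) (hw : DifferentiableAt 𝕜 w s) (v : E) :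
    fderiv 𝕜 (fun t => M t *ᵥ w t) s v
      = of (fun i j => fderiv 𝕜 (fun t => M t i j) s v) *ᵥ w s + M s *ᵥ fderiv 𝕜 w s v := by
  ext i
  have hwj := differentiableAt_pi.1 hw
  have hi : fderiv 𝕜 (fun t => (M t *ᵥ w t) i) s v = fderiv 𝕜 (fun t => M t *ᵥ w t) s v i := by
    rw [fderiv_apply (F' := fun _ : m => 𝕜) (DifferentiableAt.matrix_mulVec hM hw) i]
    rfl
  rw [← hi]
  simp only [mulVec, dotProduct]
  rw [fderiv_fun_sum (A := fun j t => M t i j * w t j) fun j _ => (hM i j).mul (hwj j)]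
  simp only [_root_.sum_apply, fderiv_fun_mul (hM i _) (hwj _), fderiv_apply hw]
  simp [mulVec, dotProduct, Finset.sum_add_distrib, add_comm, mul_comm]

end MatrixMulVec

theorem Commute.ringInverse_right {M₀ : Type*} [MonoidWithZero M₀] {a b : M₀} (h : Commute a b) :
    Commute a (Ring.inverse b) := by
  by_cases hb : IsUnit b
  · obtain ⟨u, rfl⟩ := hb
    rw [Ring.inverse_unit]
    exact h.units_inv_right
  · rw [Ring.inverse_non_unit b hb]
    exact Commute.zero_right a

section Companion

variable {k : ℕ}

theorem differentiableAt_LcompA_apply (i j : Fin k) (s : Fin k → ℂ) :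
    DifferentiableAt ℂ (fun t => LcompA k t i j) s := by
  by_cases hi : (i : ℕ) = k - 1 <;> simp only [LcompA, hi, if_true, if_false]
  · exact (differentiableAt_apply _ s).const_mul _
  · exact differentiableAt_const _

theorem fderiv_LcompA_apply (i j : Fin k) (s v : Fin k → ℂ) :
    fderiv ℂ (fun t => LcompA k t i j) s v = (LcompA k v - LcompA k 0) i j := by
  by_cases hi : (i : ℕ) = k - 1 <;> simp only [LcompA, hi, if_true, if_false]
  · rw [((hasFDerivAt_apply _ s).const_mul _).fderiv]
    simp [LcompA, hi]
  · simp [LcompA, hi]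

variable {w : (Fin k → ℂ) → Fin k → ℂ} {s : Fin k → ℂ}

theorem differentiableAt_LcompA_pow_mulVec (m : ℕ) (hw : DifferentiableAt ℂ w s) :
    DifferentiableAt ℂ (fun t => LcompA k t ^ m *ᵥ w t) s := by
  induction m with
  | zero => simpa using hw
  | succ m ih =>
    simp only [pow_succ', ← mulVec_mulVec]
    exact DifferentiableAt.matrix_mulVec (differentiableAt_LcompA_apply · · s) ih

theorem fderiv_LcompA_mulVec_apply (hw : DifferentiableAt ℂ w s) (v : Fin k → ℂ) :
    fderiv ℂ (fun t => LcompA k t *ᵥ w t) s v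
      = (LcompA k v - LcompA k 0) *ᵥ w s + LcompA k s *ᵥ fderiv ℂ w s v := by
  rw [fderiv_matrix_mulVec_apply (differentiableAt_LcompA_apply · · s) hw]
  congr 2
  ext i j
  exact fderiv_LcompA_apply i j s v

theorem LcompA_mulVec_apply_of_lt (s x : Fin k → ℂ) (i : ℕ) (hi : i + 1 < k) :
    (LcompA k s *ᵥ x) ⟨i, by omega⟩ = x ⟨i + 1, hi⟩ := by
  have hik : i ≠ k - 1 := by omega
  have hj (j : Fin k) : (j : ℕ) = i + 1 ↔ j = ⟨i + 1, hi⟩ := by simp [Fin.ext_iff]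
  simp [mulVec, dotProduct, LcompA, hik, hj]

theorem LcompA_pow_mulVec_apply (s x : Fin k → ℂ) (m i : ℕ) (h : i + m < k) :
    (LcompA k s ^ m *ᵥ x) ⟨i, by omega⟩ = x ⟨i + m, h⟩ := by
  induction m generalizing i with
  | zero => simp
  | succ m ih =>
    rw [pow_succ', ← mulVec_mulVec, LcompA_mulVec_apply_of_lt _ _ i (by omega),
      ih (i + 1) (by omega)]
    simp only [add_assoc, add_comm 1 m]

theorem LcompA_single_sub_LcompA_zero_mulVec (m : Fin k) (x : Fin k → ℂ) :
    (LcompA k (Pi.single m 1) - LcompA k 0) *ᵥ x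
      = ((-1) ^ (m : ℕ) * x m.rev) • Pi.single ⟨k - 1, by have := m.isLt; omega⟩ 1 := by
  ext i
  by_cases hi : (i : ℕ) = k - 1
  · have hj (j : Fin k) : (⟨k - 1 - j, by omega⟩ : Fin k) = m ↔ j = m.rev := by
      simp only [Fin.ext_iff, Fin.val_rev]; omega
    have hexp : k - 1 - (k - (m + 1)) = m := by omega
    have hi' : i = ⟨k - 1, by omega⟩ := Fin.ext hi
    simp [mulVec, dotProduct, LcompA, Pi.single_apply, hj, hexp, hi']
  · simp [mulVec, dotProduct, LcompA, hi, Fin.ext_iff]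

theorem neg_one_pow_smul_LcompA_single_sub_mulVec (h : ℕ) (h1 : 1 ≤ h) (h2 : h ≤ k - 1)
    (s x : Fin k → ℂ) :
    (-1 : ℂ) ^ (k + h) • ((LcompA k (Pi.single ⟨h - 1, by omega⟩ 1) - LcompA k 0) *ᵥ x)
      = (LcompA k (Pi.single ⟨k - 1, by omega⟩ 1) - LcompA k 0) *ᵥ (LcompA k s ^ (k - h) *ᵥ x) := by
  have hrev_h : (⟨h - 1, by omega⟩ : Fin k).rev = ⟨0 + (k - h), by omega⟩ := by
    ext; simp only [Fin.val_rev]; omega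
  have hrev_k : (⟨k - 1, by omega⟩ : Fin k).rev = ⟨0, by omega⟩ := by
    ext; simp only [Fin.val_rev]; omega
  have hsign : (-1 : ℂ) ^ (k + h) * (-1) ^ (h - 1) = (-1) ^ (k - 1) := by
    rw [← pow_add, show k + h + (h - 1) = k - 1 + 2 * h by omega, pow_add, pow_mul]
    simp
  rw [LcompA_single_sub_LcompA_zero_mulVec, LcompA_single_sub_LcompA_zero_mulVec, smul_smul,
    hrev_h, hrev_k, ← LcompA_pow_mulVec_apply s x (k - h) 0 (by omega), ← mul_assoc, hsign]

theorem commute_LcompA_LPprimeA (s : Fin k → ℂ) : Commute (LcompA k s) (LPprimeA k s) :=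
  (((Commute.refl _).pow_right _).smul_right _).add_right
    (Commute.sum_right _ _ _ fun _ _ => ((Commute.refl _).pow_right _).smul_right _)

theorem commute_LcompA_inv_LPprimeA (s : Fin k → ℂ) : Commute (LcompA k s) (LPprimeA k s)⁻¹ := by
  rw [nonsing_inv_eq_ringInverse]
  exact (commute_LcompA_LPprimeA s).ringInverse_right

end Companion

theorem companion_preserves_singular_solutions_general
    (k : ℕ) (U : Set (Fin k → ℂ)) (hU : IsOpen U)
    (Ψ : (Fin k → ℂ) → Fin k → ℂ) (hΨdiff : DifferentiableOn ℂ Ψ U)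
    (hΨsol : ∀ s ∈ U, SatAA k Ψ s) :
    ∀ s ∈ U, SatAA k (fun t => LcompA k t *ᵥ Ψ t) s := by
  intro s hs h h1 h2
  have hΨ : DifferentiableAt ℂ Ψ s := hΨdiff.differentiableAt (hU.mem_nhds hs)
  have hpow := differentiableAt_LcompA_pow_mulVec (k - h) hΨ
  have hreorder : (fun t => LcompA k t ^ (k - h) *ᵥ (LcompA k t *ᵥ Ψ t))
      = fun t => LcompA k t *ᵥ (LcompA k t ^ (k - h) *ᵥ Ψ t) := by
    funext t
    rw [mulVec_mulVec, mulVec_mulVec, ← pow_succ, ← pow_succ']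
  have hcomm : LcompA k s *ᵥ (LcompA k s ^ (k - h - 1) *ᵥ ((LPprimeA k s)⁻¹ *ᵥ Ψ s))
      = LcompA k s ^ (k - h - 1) *ᵥ ((LPprimeA k s)⁻¹ *ᵥ (LcompA k s *ᵥ Ψ s)) := by
    simp only [mulVec_mulVec, ← mul_assoc,
      ((Commute.self_pow _ _).mul_right (commute_LcompA_inv_LPprimeA s)).eq]
  beta_reduce
  rw [hreorder, fderiv_LcompA_mulVec_apply hΨ, fderiv_LcompA_mulVec_apply hpow, smul_add,
    ← mulVec_smul (LcompA k s), hΨsol s hs h h1 h2,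
    neg_one_pow_smul_LcompA_single_sub_mulVec h h1 h2 s, mulVec_add, mulVec_smul, hcomm]
  abel

/-- on an open set `U` where `P_s` has `k` pairwise distinct roots, if `Ψ` is a
holomorphic solution of (@@) on `U` then `s ↦ A(s) Ψ(s)` is also a solution of (@@) on `U`. -/
theorem companion_preserves_singular_solutions
    (k : ℕ) (hk : 2 ≤ k) (U : Set (Fin k → ℂ)) (hU : IsOpen U)
    (hdist : ∀ s ∈ U, ∃ z : Fin k → ℂ, Function.Injective z ∧ ∀ j : Fin k, LP k s (z j) = 0)
    (Ψ : (Fin k → ℂ) → Fin k → ℂ) (hΨdiff : DifferentiableOn ℂ Ψ U)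
    (hΨsol : ∀ s ∈ U, SatAA k Ψ s) :
    ∀ s ∈ U, SatAA k (fun t => LcompA k t *ᵥ Ψ t) s :=
  companion_preserves_singular_solutions_general k U hU Ψ hΨdiff hΨsol
end
end

section
/- Let U ⊆ ℂ^k be an open set on which P_s has k pairwise distinct roots, and let Φ : U → ℂ^k be a holomorphic solution of the system (@). Then Ψ(s) := P'_s(A(s))·Φ(s) is a solution of the system (@@) on U. -/
open Matrix Complex

noncomputable section

/-!
Write `A = A(s)`, `E` for the matrix unit in the bottom-left corner and
`S_n = ∑_{i<n} A^(n-1-i) E A^i`, the derivative of `X ↦ X^n` at `A` in the direction `E`.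
Since `A(s)` is affine in `s` with `∂A/∂s_h = (-1)^(h-1) E A^(k-h)`, the derivatives of `A^n` and of
`P'_s(A)` are expressed through `S_n` and through `W`, the polynomial `P'_s` evaluated on `S` in place
of the powers of `A`. For `Ψ = P'_s(A) Φ` the product rule, the system (@) for `Φ` and the fact that
`P'_s(A)` commutes with `A` reduce (@@) to the matrix identity
`(-1)^(k+h) ∂_h P' + [P', ∂_k A^(k-h)] - A^(k-h) ∂_k P' = (-1)^k (k-h) A^(k-h-1)`,
which, after substitution, is the commutator identity `[P', S_m] = [A^m, W]`. This follows from
`[A^m, S_n] = [A^n, S_m]`, obtained by expanding `S_(m+n)` with the Leibniz rule in both orders.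
Finally `P'_s(A)` is invertible: `P_s` is separable and annihilates its companion matrix.
-/

open Polynomial

section PowDeriv

variable {R : Type*} [Ring R]

def powDeriv (a e : R) (n : ℕ) : R :=
  ∑ i ∈ Finset.range n, a ^ (n - 1 - i) * e * a ^ i

theorem powDeriv_succ (a e : R) (n : ℕ) :
    powDeriv a e (n + 1) = a * powDeriv a e n + e * a ^ n := by
  rw [powDeriv, Finset.sum_range_succ, powDeriv, Finset.mul_sum, Nat.add_sub_cancel, Nat.sub_self,
    pow_zero, one_mul]
  congr 1
  refine Finset.sum_congr rfl fun i hi => ?_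
  have hi : i < n := Finset.mem_range.1 hi
  rw [← mul_assoc, ← mul_assoc, ← pow_succ', show n - 1 - i + 1 = n - i by omega]

theorem powDeriv_add (a e : R) (m n : ℕ) :
    powDeriv a e (m + n) = a ^ m * powDeriv a e n + powDeriv a e m * a ^ n := by
  induction m with
  | zero => simp [powDeriv]
  | succ m ih =>
    rw [Nat.add_right_comm, powDeriv_succ, ih, powDeriv_succ, pow_succ', pow_add]
    simp only [mul_add, add_mul, mul_assoc]
    abel

theorem powDeriv_commutator_symm (a e : R) (m n : ℕ) :
    a ^ m * powDeriv a e n - powDeriv a e n * a ^ m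
      = a ^ n * powDeriv a e m - powDeriv a e m * a ^ n := by
  rw [sub_eq_sub_iff_add_eq_add, ← powDeriv_add, add_comm m n, powDeriv_add]

theorem powDeriv_mul_of_commute (a e : R) {b : R} (hab : Commute a b) (n : ℕ) :
    powDeriv a (e * b) n = powDeriv a e n * b := by
  rw [powDeriv, powDeriv, Finset.sum_mul]
  refine Finset.sum_congr rfl fun i _ => ?_
  simp only [mul_assoc, (hab.pow_left i).eq]

variable {S : Type*} [CommSemiring S] [Algebra S R]

theorem powDeriv_smul (a e : R) (c : S) (n : ℕ) : powDeriv a (c • e) n = c • powDeriv a e n := by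
  simp only [powDeriv, Finset.smul_sum, mul_smul_comm, smul_mul_assoc]

theorem commute_aeval_pow (a : R) (p : S[X]) (m : ℕ) : Commute (aeval a p) (a ^ m) := by
  simpa using (Commute.all p (X ^ m)).map (aeval a)

end PowDeriv

section LPprimeWith

/-- `P'_s` with `f n` in place of `X ^ n`; for `f = powDeriv A E` it is the derivative of
`X ↦ P'_s(X)` at `A` in the direction `E`. -/
def LPprimeWith {R : Type*} [AddCommMonoid R] [Module ℂ R] (k : ℕ) (s : Fin k → ℂ) (f : ℕ → R) :
    R :=
  (k : ℂ) • f (k - 1) + ∑ i : Fin k,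
    ((-1 : ℂ) ^ ((i : ℕ) + 1) * ((k - 1 - (i : ℕ) : ℕ) : ℂ) * s i) • f (k - 2 - (i : ℕ))

variable {k : ℕ} (s : Fin k → ℂ)

theorem LPprimeA_eq_LPprimeWith : LPprimeA k s = LPprimeWith k s (LcompA k s ^ ·) := rfl

theorem map_LPprimeWith {R R' : Type*} [AddCommMonoid R] [Module ℂ R] [AddCommMonoid R']
    [Module ℂ R'] (φ : R →ₗ[ℂ] R') (f : ℕ → R) :
    φ (LPprimeWith k s f) = LPprimeWith k s (fun n => φ (f n)) := by
  simp [LPprimeWith]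

theorem LPprimeWith_pow_commutator {R : Type*} [Ring R] [Algebra ℂ R] (a e : R) (m : ℕ) :
    LPprimeWith k s (a ^ ·) * powDeriv a e m - powDeriv a e m * LPprimeWith k s (a ^ ·)
      = a ^ m * LPprimeWith k s (powDeriv a e) - LPprimeWith k s (powDeriv a e) * a ^ m := by
  have h₁ := map_LPprimeWith s
    (LinearMap.mulRight ℂ (powDeriv a e m) - LinearMap.mulLeft ℂ (powDeriv a e m)) (a ^ ·)
  have h₂ := map_LPprimeWith s
    (LinearMap.mulLeft ℂ (a ^ m) - LinearMap.mulRight ℂ (a ^ m)) (powDeriv a e)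
  simp only [LinearMap.sub_apply, LinearMap.mulRight_apply, LinearMap.mulLeft_apply] at h₁ h₂
  rw [h₁, h₂]
  congr 1
  funext n
  exact powDeriv_commutator_symm a e n m

end LPprimeWith

section NormedAlgebra

variable {𝔸 : Type*} [NormedRing 𝔸] [NormedAlgebra ℂ 𝔸]

theorem fderiv_pow_apply {E : Type*} [NormedAddCommGroup E] [NormedSpace ℂ E] {f : E → 𝔸} {x : E}
    (hf : DifferentiableAt ℂ f x) (n : ℕ) (v : E) :
    fderiv ℂ (fun t => f t ^ n) x v = powDeriv (f x) (fderiv ℂ f x v) n := by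
  rw [fderiv_fun_pow' n hf]
  simp [powDeriv]

theorem fderiv_LPprimeWith_pow_apply {k : ℕ} {f : (Fin k → ℂ) → 𝔸} {s : Fin k → ℂ}
    (hf : DifferentiableAt ℂ f s) (v : Fin k → ℂ) :
    fderiv ℂ (fun t => LPprimeWith k t (f t ^ ·)) s v
      = LPprimeWith k s (powDeriv (f s) (fderiv ℂ f s v))
        + ∑ i : Fin k, ((-1 : ℂ) ^ ((i : ℕ) + 1) * ((k - 1 - (i : ℕ) : ℕ) : ℂ) * v i) •
            f s ^ (k - 2 - (i : ℕ)) := by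
  have hpow (n : ℕ) := (hf.fun_pow n).hasFDerivAt
  have hcoef (i : Fin k) := ((ContinuousLinearMap.proj (R := ℂ) i).hasFDerivAt (x := s)).const_mul
    ((-1 : ℂ) ^ ((i : ℕ) + 1) * ((k - 1 - (i : ℕ) : ℕ) : ℂ))
  have h := ((hpow (k - 1)).fun_const_smul (k : ℂ)).fun_add
    (HasFDerivAt.fun_sum (u := Finset.univ) fun i _ => (hcoef i).fun_smul (hpow (k - 2 - (i : ℕ))))
  have hP : HasFDerivAt (fun t => LPprimeWith k t (f t ^ ·)) _ s := h
  rw [hP.fderiv]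
  simp [LPprimeWith, fderiv_pow_apply hf, Finset.sum_add_distrib, add_assoc]

end NormedAlgebra

/- Derivatives of matrix-valued maps need a normed algebra structure on matrices; all norms give
the same `fderiv`, and we use the `ℓ∞` operator norm. -/
attribute [local instance] Matrix.linftyOpNormedRing Matrix.linftyOpNormedAlgebra

section MatrixCalculus

variable {𝕜 E : Type*} [RCLike 𝕜] [NormedAddCommGroup E] [NormedSpace 𝕜 E]
  {n : Type*} [Fintype n] [DecidableEq n]

variable (𝕜 n) in
def mulVecCLM : Matrix n n 𝕜 →L[𝕜] (n → 𝕜) →L[𝕜] n → 𝕜 :=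
  (Matrix.mulVecBilin 𝕜 𝕜).toContinuousBilinearMap

theorem hasFDerivAt_mulVec {M : E → Matrix n n 𝕜} {Φ : E → n → 𝕜} {x : E}
    (hM : DifferentiableAt 𝕜 M x) (hΦ : DifferentiableAt 𝕜 Φ x) :
    HasFDerivAt (fun t => M t *ᵥ Φ t) ((mulVecCLM 𝕜 n).precompR E (M x) (fderiv 𝕜 Φ x)
      + (mulVecCLM 𝕜 n).precompL E (fderiv 𝕜 M x) (Φ x)) x :=
  (mulVecCLM 𝕜 n).hasFDerivAt_of_bilinear hM.hasFDerivAt hΦ.hasFDerivAt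

theorem DifferentiableAt.mulVec {M : E → Matrix n n 𝕜} {Φ : E → n → 𝕜} {x : E}
    (hM : DifferentiableAt 𝕜 M x) (hΦ : DifferentiableAt 𝕜 Φ x) :
    DifferentiableAt 𝕜 (fun t => M t *ᵥ Φ t) x :=
  (hasFDerivAt_mulVec hM hΦ).differentiableAt

theorem fderiv_mulVec_apply {M : E → Matrix n n 𝕜} {Φ : E → n → 𝕜} {x : E}
    (hM : DifferentiableAt 𝕜 M x) (hΦ : DifferentiableAt 𝕜 Φ x) (v : E) :
    fderiv 𝕜 (fun t => M t *ᵥ Φ t) x v = fderiv 𝕜 M x v *ᵥ Φ x + M x *ᵥ fderiv 𝕜 Φ x v := by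
  rw [(hasFDerivAt_mulVec hM hΦ).fderiv, add_comm]
  rfl

theorem smul_fderiv_mulVec_of_commute {M B : E → Matrix n n 𝕜} {Φ : E → n → 𝕜} {x u w : E}
    {σ : 𝕜} (hM : DifferentiableAt 𝕜 M x) (hB : DifferentiableAt 𝕜 B x)
    (hΦ : DifferentiableAt 𝕜 Φ x) (hMB : Commute (M x) (B x))
    (hsys : σ • fderiv 𝕜 Φ x u = fderiv 𝕜 (fun t => B t *ᵥ Φ t) x w) :
    σ • fderiv 𝕜 (fun t => M t *ᵥ Φ t) x u
      = fderiv 𝕜 (fun t => B t *ᵥ (M t *ᵥ Φ t)) x w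
        + (σ • fderiv 𝕜 M x u + M x * fderiv 𝕜 B x w - fderiv 𝕜 B x w * M x
            - B x * fderiv 𝕜 M x w) *ᵥ Φ x := by
  rw [fderiv_mulVec_apply hB hΦ] at hsys
  have hMsys := congrArg (M x *ᵥ ·) hsys
  rw [fderiv_mulVec_apply hM hΦ, fderiv_mulVec_apply hB (hM.mulVec hΦ),
    fderiv_mulVec_apply hM hΦ]
  simp only [Matrix.mulVec_add, Matrix.mulVec_smul, Matrix.add_mulVec, Matrix.sub_mulVec,
    Matrix.smul_mulVec, Matrix.mulVec_mulVec, hMB.eq] at hMsys ⊢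
  rw [smul_add, hMsys]
  abel

end MatrixCalculus

section CompanionMatrix

variable {k : ℕ} (s : Fin k → ℂ)

theorem LcompA_row_of_lt {i : ℕ} (hi : i + 1 < k) :
    LcompA k s ⟨i, by omega⟩ = Pi.single ⟨i + 1, hi⟩ 1 := by
  funext j
  simp only [LcompA, Pi.single_apply, Fin.ext_iff]
  rw [if_neg (by omega)]

def LPpoly (k : ℕ) (s : Fin k → ℂ) : ℂ[X] :=
  X ^ k + ∑ i : Fin k, C ((-1 : ℂ) ^ ((i : ℕ) + 1) * s i) * X ^ (k - 1 - (i : ℕ))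

theorem eval_LPpoly (z : ℂ) : (LPpoly k s).eval z = LP k s z := by
  simp [LPpoly, LP, eval_finsetSum]

theorem aeval_LPpoly (M : Matrix (Fin k) (Fin k) ℂ) :
    aeval M (LPpoly k s)
      = M ^ k + ∑ i : Fin k, ((-1 : ℂ) ^ ((i : ℕ) + 1) * s i) • M ^ (k - 1 - (i : ℕ)) := by
  simp [LPpoly, map_sum, Algebra.smul_def]

theorem aeval_derivative_LPpoly :
    aeval (LcompA k s) (derivative (LPpoly k s)) = LPprimeA k s := by
  have haeval (c : ℂ) (m : ℕ) : aeval (LcompA k s) (C c * X ^ m) = c • LcompA k s ^ m := by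
    rw [C_mul_X_pow_eq_monomial, aeval_monomial, Algebra.smul_def]
  rw [LPpoly, LPprimeA, derivative_add, derivative_X_pow, derivative_sum, map_add, map_sum,
    haeval]
  congr 1
  refine Finset.sum_congr rfl fun i _ => ?_
  rw [derivative_C_mul_X_pow, haeval, mul_right_comm,
    show k - 1 - (i : ℕ) - 1 = k - 2 - i by omega]

theorem degree_LPpoly_sub_X_pow_lt : (LPpoly k s - X ^ k).degree < (k : WithBot ℕ) := by
  rw [LPpoly, add_sub_cancel_left]
  refine (degree_sum_le _ _).trans_lt ((Finset.sup_lt_iff (WithBot.bot_lt_coe k)).2 fun i _ => ?_)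
  exact (degree_C_mul_X_pow_le _ _).trans_lt (WithBot.coe_lt_coe.2 (show k - 1 - (i : ℕ) < k by omega))

theorem monic_LPpoly : (LPpoly k s).Monic := by
  simpa using monic_X_pow_add (degree_LPpoly_sub_X_pow_lt s)

theorem natDegree_LPpoly : (LPpoly k s).natDegree = k := by
  have h := natDegree_add_eq_left_of_degree_lt (p := X ^ k) (q := LPpoly k s - X ^ k)
    (by rw [degree_X_pow]; exact degree_LPpoly_sub_X_pow_lt s)
  rwa [add_sub_cancel, natDegree_X_pow] at h

theorem LPpoly_eq_prod {z : Fin k → ℂ} (hz : Function.Injective z)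
    (hroots : ∀ j, LP k s (z j) = 0) : LPpoly k s = ∏ j, (X - C (z j)) := by
  refine eq_of_monic_of_dvd_of_natDegree_le
    (monic_prod_of_monic _ _ fun j _ => monic_X_sub_C (z j)) (monic_LPpoly s) ?_ ?_
  · refine Finset.prod_dvd_of_coprime (fun i _ j _ hij => pairwise_coprime_X_sub_C hz hij)
      fun j _ => dvd_iff_isRoot.2 ?_
    rw [IsRoot, eval_LPpoly, hroots]
  · rw [natDegree_LPpoly, natDegree_prod_of_monic _ _ fun j _ => monic_X_sub_C (z j)]
    simp

theorem separable_LPpoly {z : Fin k → ℂ} (hz : Function.Injective z)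
    (hroots : ∀ j, LP k s (z j) = 0) : (LPpoly k s).Separable := by
  rw [LPpoly_eq_prod s hz hroots]
  exact separable_prod_X_sub_C_iff.2 hz

variable [NeZero k]

theorem LcompA_pow_apply_zero {a : ℕ} (ha : a < k) :
    (LcompA k s ^ a) 0 = Pi.single ⟨a, ha⟩ 1 := by
  induction a with
  | zero => funext j; simp [Matrix.one_apply, Pi.single_apply, eq_comm]
  | succ a ih =>
    rw [pow_succ, Matrix.mul_apply_eq_vecMul, ih (by omega), Matrix.single_one_vecMul]
    exact LcompA_row_of_lt s ha

theorem single_top_eq_mul_LcompA_pow (j : Fin k) :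
    Matrix.single ⊤ j (1 : ℂ) = Matrix.single ⊤ 0 1 * LcompA k s ^ (j : ℕ) := by
  ext p q
  by_cases hp : p = ⊤
  · subst hp
    rw [Matrix.single_mul_apply_same, LcompA_pow_apply_zero s j.isLt, one_mul]
    simp [Matrix.single_apply, Pi.single_apply, eq_comm]
  · rw [Matrix.single_mul_apply_of_ne _ _ _ _ _ hp]
    simp [Ne.symm hp]

theorem aeval_LcompA_LPpoly_apply_zero : aeval (LcompA k s) (LPpoly k s) 0 = 0 := by
  have hk : 0 < k := NeZero.pos k
  have hrow : (LcompA k s ^ k) 0 = LcompA k s ⊤ := by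
    rw [show LcompA k s ^ k = LcompA k s ^ (k - 1) * LcompA k s by
        rw [← pow_succ, Nat.sub_add_cancel hk],
      Matrix.mul_apply_eq_vecMul, LcompA_pow_apply_zero s (by omega), Matrix.single_one_vecMul]
    rfl
  funext j
  have hj : k - 1 - (j : ℕ) < k := by omega
  rw [aeval_LPpoly, Matrix.add_apply, hrow, Matrix.sum_apply,
    Finset.sum_eq_single ⟨k - 1 - j, hj⟩]
  · rw [Matrix.smul_apply, LcompA_pow_apply_zero s (by omega)]
    simp only [LcompA, Fin.val_top, if_true, Pi.single_apply, smul_eq_mul, mul_ite, mul_one,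
      mul_zero]
    rw [if_pos (Fin.ext (by simp only; omega)), pow_succ, Pi.zero_apply]
    ring
  · intro i _ hi
    rw [Matrix.smul_apply, LcompA_pow_apply_zero s (by omega), Pi.single_apply,
      if_neg (fun h => hi (Fin.ext (by simp only [Fin.ext_iff] at h ⊢; omega))), smul_zero]
  · simp

theorem aeval_LcompA_LPpoly : aeval (LcompA k s) (LPpoly k s) = 0 := by
  funext r
  calc aeval (LcompA k s) (LPpoly k s) r
      = (LcompA k s ^ (r : ℕ) * aeval (LcompA k s) (LPpoly k s)) 0 := by
        rw [Matrix.mul_apply_eq_vecMul, LcompA_pow_apply_zero s r.isLt, Matrix.single_one_vecMul]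
        rfl
    _ = 0 := by
        rw [← (commute_aeval_pow _ _ _).eq, Matrix.mul_apply_eq_vecMul,
          aeval_LcompA_LPpoly_apply_zero, Matrix.zero_vecMul]

theorem isUnit_LPprimeA {z : Fin k → ℂ} (hz : Function.Injective z)
    (hroots : ∀ j, LP k s (z j) = 0) : IsUnit (LPprimeA k s) := by
  obtain ⟨a, b, hab⟩ := separable_LPpoly s hz hroots
  have hinv := congrArg (aeval (LcompA k s)) hab
  rw [map_add, map_mul, map_mul, aeval_LcompA_LPpoly, aeval_derivative_LPpoly, mul_zero,
    zero_add, map_one] at hinv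
  exact (Matrix.isUnit_iff_isUnit_det _).2 (Matrix.isUnit_det_of_left_inverse hinv)

end CompanionMatrix

section Derivatives

variable {k : ℕ} [NeZero k] (s : Fin k → ℂ)

theorem LcompA_eq_add_sum :
    LcompA k s = LcompA k 0 + ∑ c : Fin k, s c • ((-1 : ℂ) ^ (c : ℕ) • Matrix.single ⊤ c.rev 1) := by
  ext i j
  by_cases hi : (i : ℕ) = k - 1
  · obtain rfl : i = ⊤ := Fin.ext (by simpa using hi)
    simp only [LcompA, Fin.val_top, ↓reduceIte, Nat.sub_sub, Matrix.smul_single, smul_eq_mul,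
      mul_one, Matrix.add_apply, Pi.zero_apply, mul_zero, Matrix.sum_apply, Matrix.single_apply,
      Fin.rev_eq_iff, true_and, Finset.sum_ite_eq', Finset.mem_univ, Fin.val_rev, zero_add,
      add_comm 1 (j : ℕ)]
    exact mul_comm _ _
  · have hi' : ⊤ ≠ i := fun h => hi (by simp [← h])
    simp [LcompA, hi, hi', Matrix.sum_apply]

theorem hasFDerivAt_LcompA :
    HasFDerivAt (LcompA k)
      (∑ c : Fin k, (ContinuousLinearMap.proj (R := ℂ) c).smulRight
        ((-1 : ℂ) ^ (c : ℕ) • Matrix.single ⊤ c.rev (1 : ℂ))) s := by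
  have h : LcompA k = fun t => LcompA k 0 + (∑ c : Fin k,
      (ContinuousLinearMap.proj (R := ℂ) c).smulRight
        ((-1 : ℂ) ^ (c : ℕ) • Matrix.single ⊤ c.rev (1 : ℂ))) t := by
    funext t
    rw [LcompA_eq_add_sum]
    simp
  rw [h]
  exact (ContinuousLinearMap.hasFDerivAt _).const_add _

theorem differentiableAt_LcompA_pow (n : ℕ) : DifferentiableAt ℂ (fun t => LcompA k t ^ n) s :=
  (hasFDerivAt_LcompA s).differentiableAt.pow n

theorem differentiableAt_LPprimeA : DifferentiableAt ℂ (LPprimeA k) s := by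
  have hA : Differentiable ℂ (LcompA k) := fun t => (hasFDerivAt_LcompA t).differentiableAt
  show DifferentiableAt ℂ (fun t => (k : ℂ) • LcompA k t ^ (k - 1) + ∑ i : Fin k,
    ((-1 : ℂ) ^ ((i : ℕ) + 1) * ((k - 1 - (i : ℕ) : ℕ) : ℂ) * t i) • LcompA k t ^ (k - 2 - (i : ℕ))) s
  fun_prop

theorem fderiv_LcompA_single (c : Fin k) :
    fderiv ℂ (LcompA k) s (Pi.single c 1)
      = (-1 : ℂ) ^ (c : ℕ) • (Matrix.single ⊤ 0 1 * LcompA k s ^ (c.rev : ℕ)) := by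
  rw [(hasFDerivAt_LcompA s).fderiv, ← single_top_eq_mul_LcompA_pow]
  simp [Pi.single_apply]

theorem fderiv_LcompA_pow_single (c : Fin k) (n : ℕ) :
    fderiv ℂ (fun t => LcompA k t ^ n) s (Pi.single c 1)
      = (-1 : ℂ) ^ (c : ℕ) •
          (powDeriv (LcompA k s) (Matrix.single ⊤ 0 1) n * LcompA k s ^ (c.rev : ℕ)) := by
  have h : fderiv ℂ (fun t => LcompA k t ^ n) s (Pi.single c 1)
      = powDeriv (LcompA k s) (fderiv ℂ (LcompA k) s (Pi.single c 1)) n :=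
    fderiv_pow_apply (hasFDerivAt_LcompA s).differentiableAt n _
  rw [h, fderiv_LcompA_single, powDeriv_smul,
    powDeriv_mul_of_commute _ _ ((Commute.refl _).pow_right _)]

theorem fderiv_LPprimeA_apply (v : Fin k → ℂ) :
    fderiv ℂ (LPprimeA k) s v
      = LPprimeWith k s (powDeriv (LcompA k s) (fderiv ℂ (LcompA k) s v))
        + ∑ i : Fin k, ((-1 : ℂ) ^ ((i : ℕ) + 1) * ((k - 1 - (i : ℕ) : ℕ) : ℂ) * v i) •
            LcompA k s ^ (k - 2 - (i : ℕ)) :=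
  fderiv_LPprimeWith_pow_apply (hasFDerivAt_LcompA s).differentiableAt v

theorem fderiv_LPprimeA_single (c : Fin k) :
    fderiv ℂ (LPprimeA k) s (Pi.single c 1)
      = (-1 : ℂ) ^ (c : ℕ) • (LPprimeWith k s (powDeriv (LcompA k s) (Matrix.single ⊤ 0 1))
            * LcompA k s ^ (c.rev : ℕ))
        + ((-1 : ℂ) ^ ((c : ℕ) + 1) * ((k - 1 - (c : ℕ) : ℕ) : ℂ)) •
            LcompA k s ^ (k - 2 - (c : ℕ)) := by
  have hW := map_LPprimeWith s
    ((-1 : ℂ) ^ (c : ℕ) • LinearMap.mulRight ℂ (LcompA k s ^ (c.rev : ℕ)))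
    (powDeriv (LcompA k s) (Matrix.single ⊤ 0 1))
  simp only [LinearMap.smul_apply, LinearMap.mulRight_apply] at hW
  rw [fderiv_LPprimeA_apply, fderiv_LcompA_single, hW]
  congr 1
  · congr 1
    funext n
    rw [powDeriv_smul, powDeriv_mul_of_commute _ _ ((Commute.refl _).pow_right _)]
  · simp [Pi.single_apply]

end Derivatives

theorem LPprimeA_fderiv_identity {k : ℕ} (s : Fin k → ℂ) {h : ℕ} (h1 : 1 ≤ h) (h2 : h ≤ k - 1) :
    (-1 : ℂ) ^ (k + h) • fderiv ℂ (LPprimeA k) s (Pi.single ⟨h - 1, by omega⟩ 1)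
      + LPprimeA k s * fderiv ℂ (fun t => LcompA k t ^ (k - h)) s (Pi.single ⟨k - 1, by omega⟩ 1)
      - fderiv ℂ (fun t => LcompA k t ^ (k - h)) s (Pi.single ⟨k - 1, by omega⟩ 1) * LPprimeA k s
      - LcompA k s ^ (k - h) * fderiv ℂ (LPprimeA k) s (Pi.single ⟨k - 1, by omega⟩ 1)
      = ((-1 : ℂ) ^ k * ((k - h : ℕ) : ℂ)) • LcompA k s ^ (k - h - 1) := by
  have : NeZero k := ⟨by omega⟩
  have htop : (⟨k - 1, by omega⟩ : Fin k) = ⊤ := Fin.ext (by simp)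
  have hrev : ((⟨h - 1, by omega⟩ : Fin k).rev : ℕ) = k - h := by simp only [Fin.val_rev]; omega
  rw [htop, fderiv_LPprimeA_single, fderiv_LPprimeA_single, fderiv_LcompA_pow_single]
  simp only [Fin.rev_top, bot_eq_zero, Fin.val_zero, Fin.val_top, pow_zero, mul_one, Nat.sub_self,
    Nat.cast_zero, mul_zero, zero_smul, add_zero, hrev, Nat.sub_add_cancel h1,
    show k - 1 - (h - 1) = k - h by omega, show k - 2 - (h - 1) = k - h - 1 by omega]
  have hσ₁ : (-1 : ℂ) ^ (k + h) * (-1) ^ (h - 1) = (-1) ^ (k - 1) := by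
    rw [← pow_add, show k + h + (h - 1) = k - 1 + 2 * h by omega, pow_add, pow_mul]
    simp
  have hσ₂ : (-1 : ℂ) ^ (k + h) * ((-1) ^ h * ((k - h : ℕ) : ℂ))
      = (-1) ^ k * ((k - h : ℕ) : ℂ) := by
    rw [← mul_assoc, ← pow_add, add_assoc, ← two_mul, pow_add, pow_mul]
    simp
  rw [smul_add, smul_smul, smul_smul, hσ₁, hσ₂, mul_smul_comm, smul_mul_assoc, mul_smul_comm,
    LPprimeA_eq_LPprimeWith]
  -- what is left is `(-1)^(k-1)` times the commutator identity `[P', S] = [A^(k-h), W]`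
  linear_combination (norm := module)
    (-1 : ℂ) ^ (k - 1) • LPprimeWith_pow_commutator s (LcompA k s) (Matrix.single ⊤ 0 1) (k - h)

theorem PprimeA_maps_solutions_to_singular_solutions_general
    (k : ℕ) (U : Set (Fin k → ℂ)) (hU : IsOpen U)
    (hdist : ∀ s ∈ U, ∃ z : Fin k → ℂ, Function.Injective z ∧ ∀ j : Fin k, LP k s (z j) = 0)
    (Φ : (Fin k → ℂ) → Fin k → ℂ) (hΦdiff : DifferentiableOn ℂ Φ U)
    (hΦsol : ∀ s ∈ U, SatA k Φ s) :
    ∀ s ∈ U, SatAA k (fun t => LPprimeA k t *ᵥ Φ t) s := by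
  intro s hs h h1 h2
  have : NeZero k := ⟨by omega⟩
  obtain ⟨z, hz, hroots⟩ := hdist s hs
  have hcomm : Commute (LPprimeA k s) (LcompA k s ^ (k - h)) := by
    rw [← aeval_derivative_LPpoly]
    exact commute_aeval_pow _ _ _
  have key := smul_fderiv_mulVec_of_commute (differentiableAt_LPprimeA s)
    (differentiableAt_LcompA_pow s (k - h)) (hΦdiff.differentiableAt (hU.mem_nhds hs)) hcomm
    (hΦsol s hs h h1 h2)
  rw [LPprimeA_fderiv_identity s h1 h2] at key
  rw [key, Matrix.mulVec_mulVec (Φ s), Matrix.nonsing_inv_mul _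
    ((Matrix.isUnit_iff_isUnit_det _).1 (isUnit_LPprimeA s hz hroots)), Matrix.one_mulVec,
    Matrix.smul_mulVec]

/-- on an open set `U` where `P_s` has `k` pairwise distinct roots, if `Φ` is a
holomorphic solution of (@) on `U` then `Ψ(s) := P'_s(A(s)) Φ(s)` is a solution of (@@) on `U`. -/
theorem PprimeA_maps_solutions_to_singular_solutions
    (k : ℕ) (hk : 2 ≤ k) (U : Set (Fin k → ℂ)) (hU : IsOpen U)
    (hdist : ∀ s ∈ U, ∃ z : Fin k → ℂ, Function.Injective z ∧ ∀ j : Fin k, LP k s (z j) = 0)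
    (Φ : (Fin k → ℂ) → Fin k → ℂ) (hΦdiff : DifferentiableOn ℂ Φ U)
    (hΦsol : ∀ s ∈ U, SatA k Φ s) :
    ∀ s ∈ U, SatAA k (fun t => LPprimeA k t *ᵥ Φ t) s :=
  PprimeA_maps_solutions_to_singular_solutions_general k U hU hdist Φ hΦdiff hΦsol
end
end
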